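/- arXiv:2410.15887 — 6 statements merged into one kernel-verified Lean document; each statement's English description precedes it below -/
import Mathlib

section
/- Let C_a and C_b be n×n Hermitian positive definite complex matrices, and let C̊ := C_b^{−1/2} C_a C_b^{−1/2} be the normalized covariance matrix. Then tr{(C_b⁻¹ − C_a⁻¹)(C_a − C_b)} = tr{(C̊ − I)^H C̊⁻¹ (C̊ − I)}, i.e. the Jeffreys divergence equals the weighted norm ‖C̊ − I‖²_{C̊}. (Paper's identity (18).) -/
open Matrix
open scoped ComplexOrder

/-- The square root of a positive semidefinite matrix, as defined in Mathlib (Dec 2024). -/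
noncomputable def Matrix.PosSemidef.sqrt {n : Type*} [Fintype n] [DecidableEq n] {𝕜 : Type*}
    [RCLike 𝕜] {A : Matrix n n 𝕜} (hA : A.PosSemidef) : Matrix n n 𝕜 :=
  (hA.1.eigenvectorUnitary : Matrix n n 𝕜) *
    diagonal (fun i => ((√(hA.1.eigenvalues i) : ℝ) : 𝕜)) *
    (star hA.1.eigenvectorUnitary : Matrix n n 𝕜)

/-!
The Jeffreys divergence `tr{(B⁻¹ - A⁻¹)(A - B)}` is invariant under the simultaneous congruence
`A, B ↦ S A T, S B T` for invertible `S`, `T`. Taking `S = T = C_b^{-1/2}` turns the pair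
`(C_a, C_b)` into `(C̊, I)`, and for `B = I` the first factor is `I - C̊⁻¹ = C̊⁻¹ (C̊ - I)`;
cycling the trace and using that `C̊` is Hermitian gives the weighted norm.
-/

namespace Matrix

section Sqrt

variable {n 𝕜 : Type*} [Fintype n] [DecidableEq n] [RCLike 𝕜] {A : Matrix n n 𝕜}

theorem PosSemidef.sqrt_eq_cfc (hA : A.PosSemidef) : hA.sqrt = cfc Real.sqrt A := by
  rw [hA.1.cfc_eq]
  rfl

theorem PosSemidef.sqrt_mul_sqrt (hA : A.PosSemidef) : hA.sqrt * hA.sqrt = A := by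
  have : IsSelfAdjoint A := hA.1.isSelfAdjoint
  have hspec : ∀ x ∈ spectrum ℝ A, √x * √x = x := by
    rw [hA.1.spectrum_real_eq_range_eigenvalues]
    rintro _ ⟨i, rfl⟩
    exact Real.mul_self_sqrt (hA.eigenvalues_nonneg i)
  rw [hA.sqrt_eq_cfc, ← cfc_mul Real.sqrt Real.sqrt A, cfc_congr hspec, cfc_id' ℝ A]

theorem PosSemidef.isHermitian_sqrt (hA : A.PosSemidef) : hA.sqrt.IsHermitian := by
  rw [hA.sqrt_eq_cfc]
  exact cfc_predicate _ _

theorem PosDef.isUnit_det_sqrt (hA : A.PosDef) : IsUnit hA.posSemidef.sqrt.det := by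
  have hdet := (isUnit_iff_isUnit_det A).mp hA.isUnit
  rw [← hA.posSemidef.sqrt_mul_sqrt, det_mul] at hdet
  exact isUnit_of_mul_isUnit_left hdet

theorem PosDef.inv_sqrt_mul_mul_inv_sqrt (hA : A.PosDef) :
    hA.posSemidef.sqrt⁻¹ * A * hA.posSemidef.sqrt⁻¹ = 1 := by
  set S := hA.posSemidef.sqrt
  have hS : IsUnit S.det := hA.isUnit_det_sqrt
  calc S⁻¹ * A * S⁻¹ = S⁻¹ * (S * S) * S⁻¹ := by rw [hA.posSemidef.sqrt_mul_sqrt]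
    _ = 1 := by
      rw [Matrix.mul_assoc, Matrix.mul_assoc, mul_nonsing_inv S hS, Matrix.mul_one,
        nonsing_inv_mul S hS]

end Sqrt

section Jeffreys

variable {n R : Type*} [Fintype n] [DecidableEq n] [CommRing R]

noncomputable def jeffreys (A B : Matrix n n R) : R := trace ((B⁻¹ - A⁻¹) * (A - B))

theorem jeffreys_mul_mul {S T : Matrix n n R} (hS : IsUnit S.det) (hT : IsUnit T.det)
    (A B : Matrix n n R) : jeffreys (S * A * T) (S * B * T) = jeffreys A B := by
  have hconj : ((S * B * T)⁻¹ - (S * A * T)⁻¹) * (S * A * T - S * B * T)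
      = T⁻¹ * ((B⁻¹ - A⁻¹) * (A - B)) * T := by
    simp only [mul_inv_rev]
    calc _ = T⁻¹ * (B⁻¹ - A⁻¹) * (S⁻¹ * S) * (A - B) * T := by noncomm_ring
      _ = _ := by rw [nonsing_inv_mul S hS]; noncomm_ring
  rw [jeffreys, jeffreys, hconj, trace_mul_cycle, mul_nonsing_inv T hT, one_mul]

theorem jeffreys_one {A : Matrix n n R} (hA : IsUnit A.det) :
    jeffreys A 1 = trace ((A - 1) * A⁻¹ * (A - 1)) := by
  have hfactor : (1 : Matrix n n R)⁻¹ - A⁻¹ = A⁻¹ * (A - 1) := by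
    rw [inv_one, Matrix.mul_sub, nonsing_inv_mul A hA, Matrix.mul_one]
  rw [jeffreys, hfactor, trace_mul_comm, Matrix.mul_assoc]

end Jeffreys

end Matrix

/-- Paper's identity (18): with the normalized covariance `C̊ := Cb^{−1/2} Ca Cb^{−1/2}`,
`tr{(Cb⁻¹ − Ca⁻¹)(Ca − Cb)} = tr{(C̊ − I)ᴴ C̊⁻¹ (C̊ − I)}`, i.e. the Jeffreys divergence
equals the weighted norm `‖C̊ − I‖²_{C̊}`. -/
theorem jeffreys_eq_weighted_norm {n : ℕ} (Ca Cb : Matrix (Fin n) (Fin n) ℂ)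
    (ha : Ca.PosDef) (hb : Cb.PosDef)
    (Cring : Matrix (Fin n) (Fin n) ℂ)
    (hCring : Cring = (hb.posSemidef.sqrt)⁻¹ * Ca * (hb.posSemidef.sqrt)⁻¹) :
    Matrix.trace ((Cb⁻¹ - Ca⁻¹) * (Ca - Cb)) =
      Matrix.trace ((Cring - 1)ᴴ * Cring⁻¹ * (Cring - 1)) := by
  set S := hb.posSemidef.sqrt
  have hSinv : IsUnit S⁻¹.det := isUnit_nonsing_inv_det S hb.isUnit_det_sqrt
  have hCringH : Cring.IsHermitian := by
    have h := isHermitian_conjTranspose_mul_mul S⁻¹ ha.1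
    rwa [hb.posSemidef.isHermitian_sqrt.inv.eq, ← hCring] at h
  have hCringU : IsUnit Cring.det := by
    rw [hCring, det_mul, det_mul]
    exact (hSinv.mul ((isUnit_iff_isUnit_det Ca).mp ha.isUnit)).mul hSinv
  calc trace ((Cb⁻¹ - Ca⁻¹) * (Ca - Cb)) = jeffreys Ca Cb := rfl
    _ = jeffreys Cring 1 := by
      rw [hCring, ← hb.inv_sqrt_mul_mul_inv_sqrt, jeffreys_mul_mul hSinv hSinv]
    _ = trace ((Cring - 1)ᴴ * Cring⁻¹ * (Cring - 1)) := by
      rw [jeffreys_one hCringU, (hCringH.sub isHermitian_one).eq]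
end

section
/- Let C_a and C_b be n×n Hermitian positive definite complex matrices. Then the Jeffreys divergence J := tr{(C_b⁻¹ − C_a⁻¹)(C_a − C_b)} satisfies J ≥ 0, and J = 0 if and only if C_a = C_b. -/
/-!
With `D = Ca - Cb`, the resolvent identity `Cb⁻¹ - Ca⁻¹ = Cb⁻¹ D Ca⁻¹` and `Dᴴ = D` give
`J = tr (Cb⁻¹ D Ca⁻¹ Dᴴ)`. Factoring `Cb⁻¹ = Pᴴ P` and `Ca⁻¹ = Qᴴ Q` with `P`, `Q` invertible,
cyclicity of the trace turns this into `tr (N Nᴴ)`, the squared Frobenius norm of `N = P D Qᴴ`,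
which is nonnegative and vanishes only for `N = 0`, that is for `D = 0`.
-/

open Matrix
open scoped ComplexOrder

namespace Matrix

variable {n : Type*} [Fintype n]

lemma trace_conjTranspose_mul_self_mul_mul_conjTranspose_mul_self_mul_conjTranspose
    {R : Type*} [CommSemiring R] [StarRing R] (P X Q : Matrix n n R) :
    trace (Pᴴ * P * X * (Qᴴ * Q) * Xᴴ) = trace (P * X * Qᴴ * (P * X * Qᴴ)ᴴ) := by
  simp only [conjTranspose_mul, conjTranspose_conjTranspose, Matrix.mul_assoc]
  rw [trace_mul_comm Pᴴ]
  simp only [Matrix.mul_assoc]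

variable {𝕜 : Type*} [RCLike 𝕜] [DecidableEq n] {A B : Matrix n n 𝕜}

open scoped MatrixOrder in
lemma PosSemidef.trace_mul_mul_mul_conjTranspose_nonneg (hA : A.PosSemidef) (hB : B.PosSemidef)
    (X : Matrix n n 𝕜) : 0 ≤ trace (A * X * B * Xᴴ) := by
  obtain ⟨P, rfl⟩ := CStarAlgebra.nonneg_iff_eq_star_mul_self.mp hA.nonneg
  obtain ⟨Q, rfl⟩ := CStarAlgebra.nonneg_iff_eq_star_mul_self.mp hB.nonneg
  rw [star_eq_conjTranspose, star_eq_conjTranspose,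
    trace_conjTranspose_mul_self_mul_mul_conjTranspose_mul_self_mul_conjTranspose]
  exact (posSemidef_self_mul_conjTranspose _).trace_nonneg

open scoped MatrixOrder in
lemma PosDef.trace_mul_mul_mul_conjTranspose_eq_zero_iff (hA : A.PosDef) (hB : B.PosDef)
    {X : Matrix n n 𝕜} : trace (A * X * B * Xᴴ) = 0 ↔ X = 0 := by
  obtain ⟨P, hP, rfl⟩ :=
    CStarAlgebra.isStrictlyPositive_iff_eq_star_mul_self.mp hA.isStrictlyPositive
  obtain ⟨Q, hQ, rfl⟩ :=
    CStarAlgebra.isStrictlyPositive_iff_eq_star_mul_self.mp hB.isStrictlyPositive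
  rw [star_eq_conjTranspose, star_eq_conjTranspose,
    trace_conjTranspose_mul_self_mul_mul_conjTranspose_mul_self_mul_conjTranspose,
    trace_mul_conjTranspose_self_eq_zero_iff, ((isUnit_conjTranspose Q).mpr hQ).mul_left_eq_zero,
    hP.mul_right_eq_zero]

end Matrix

/-- The Jeffreys divergence `J := tr{(Cb⁻¹ − Ca⁻¹)(Ca − Cb)}` between two Hermitian positive
definite covariance matrices satisfies `J ≥ 0`, with `J = 0` if and only if `Ca = Cb`. -/
theorem jeffreys_nonneg_and_eq_zero_iff {n : ℕ} (Ca Cb : Matrix (Fin n) (Fin n) ℂ)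
    (ha : Ca.PosDef) (hb : Cb.PosDef) :
    0 ≤ (Matrix.trace ((Cb⁻¹ - Ca⁻¹) * (Ca - Cb))).re ∧
      ((Matrix.trace ((Cb⁻¹ - Ca⁻¹) * (Ca - Cb))).re = 0 ↔ Ca = Cb) := by
  have hJ : (Cb⁻¹ - Ca⁻¹) * (Ca - Cb) = Cb⁻¹ * (Ca - Cb) * Ca⁻¹ * (Ca - Cb)ᴴ := by
    rw [inv_sub_inv (iff_of_true hb.isUnit ha.isUnit), (ha.isHermitian.sub hb.isHermitian).eq]
  obtain ⟨hre, him⟩ := Complex.nonneg_iff.mp <|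
    hb.inv.posSemidef.trace_mul_mul_mul_conjTranspose_nonneg ha.inv.posSemidef (Ca - Cb)
  rw [hJ, ← sub_eq_zero (a := Ca), ← hb.inv.trace_mul_mul_mul_conjTranspose_eq_zero_iff ha.inv,
    Complex.ext_iff, ← him]
  exact ⟨hre, by simp⟩
end

section
/- Let C_h and C_z be n×n Hermitian positive definite complex matrices, let p_a, p_b ≥ 0, set C_a := p_a·C_h + C_z, C_b := p_b·C_h + C_z, Γ := C_z^{−1/2} C_h C_z^{−1/2}, and let C := σ_max(Γ) be the largest eigenvalue of Γ. Then tr{Γ²} / ((p_a·C + 1)(p_b·C + 1)) ≤ tr{C_h C_b⁻¹ C_h C_a⁻¹}. (Lower bound in the paper's inequality (16).) -/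
open Matrix
open scoped ComplexOrder

/-- The square root `Matrix.PosSemidef.sqrt` of Mathlib (Dec 2024), removed since. -/
noncomputable def Matrix.PosSemidef.oldSqrt {n : Type*} [Fintype n] [DecidableEq n]
    {A : Matrix n n ℂ} (hA : A.PosSemidef) : Matrix n n ℂ :=
  (hA.1.eigenvectorUnitary : Matrix n n ℂ) *
    diagonal ((↑) ∘ (Real.sqrt ∘ hA.1.eigenvalues)) *
    (star (hA.1.eigenvectorUnitary : Matrix n n ℂ))

/-!
With `S = C_z^{1/2}` we have `C_h = S Γ S` and `p • C_h + C_z = S (p • Γ + 1) S`, so by similarity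
invariance of the trace, `tr{C_h C_b⁻¹ C_h C_a⁻¹} = tr{Γ (p_b Γ + 1)⁻¹ Γ (p_a Γ + 1)⁻¹}`.
Diagonalizing `Γ` turns this into `∑ λ² / ((p_a λ + 1)(p_b λ + 1))` over its eigenvalues
`λ ∈ [0, C]`, while `tr{Γ²} = ∑ λ²`; each summand only decreases when `λ` is replaced by `C` in the
denominator.
-/

open scoped MatrixOrder

theorem sq_div_mul_add_one_le_of_le {p q d c : ℝ} (hp : 0 ≤ p) (hq : 0 ≤ q) (hd : 0 ≤ d)
    (hdc : d ≤ c) : d ^ 2 / ((p * c + 1) * (q * c + 1)) ≤ d ^ 2 / ((p * d + 1) * (q * d + 1)) := by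
  have hc : 0 ≤ c := hd.trans hdc
  exact div_le_div_of_nonneg_left (sq_nonneg d) (by positivity) (by gcongr)

namespace Matrix

theorem PosSemidef.oldSqrt_eq_sqrt {n : Type*} [Fintype n] [DecidableEq n]
    {A : Matrix n n ℂ} (hA : A.PosSemidef) : hA.oldSqrt = CFC.sqrt A := by
  rw [CFC.sqrt_eq_cfc, cfc_nnreal_eq_real _ A, hA.1.cfc_eq]
  simp only [IsHermitian.cfc, Real.coe_sqrt, Real.coe_toNNReal', Unitary.conjStarAlgAut_apply,
    oldSqrt]
  congr 3
  funext i
  simp [max_eq_left (hA.eigenvalues_nonneg i)]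

theorem trace_sandwich_mul_inv_mul_sandwich_mul_inv {n R : Type*} [Fintype n] [DecidableEq n]
    [CommRing R] {S : Matrix n n R} (hS : IsUnit S.det) (X Y Z W : Matrix n n R) :
    (S * X * S * (S * Y * S)⁻¹ * (S * Z * S) * (S * W * S)⁻¹).trace =
      (X * Y⁻¹ * Z * W⁻¹).trace := by
  have hconj : S * X * S * (S * Y * S)⁻¹ * (S * Z * S) * (S * W * S)⁻¹ =
      S * (X * Y⁻¹ * Z * W⁻¹) * S⁻¹ := by
    simp only [mul_inv_rev, mul_assoc, mul_nonsing_inv_cancel_left _ _ hS,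
      nonsing_inv_mul_cancel_left _ _ hS]
  rw [hconj, trace_mul_cycle, ← mul_assoc, nonsing_inv_mul S hS, one_mul]

namespace IsHermitian

variable {n 𝕜 : Type*} [Fintype n] [DecidableEq n] [RCLike 𝕜] {A : Matrix n n 𝕜}

noncomputable def eigenDiagonal (hA : A.IsHermitian) : (n → 𝕜) →ₐ[𝕜] Matrix n n 𝕜 :=
  (Unitary.conjStarAlgAut 𝕜 _ hA.eigenvectorUnitary).toAlgEquiv.toAlgHom.comp
    (diagonalAlgHom 𝕜)

variable (hA : A.IsHermitian)

theorem eigenDiagonal_eigenvalues : hA.eigenDiagonal (RCLike.ofReal ∘ hA.eigenvalues) = A :=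
  hA.spectral_theorem.symm

theorem trace_eigenDiagonal (f : n → 𝕜) : (hA.eigenDiagonal f).trace = ∑ i, f i := by
  simp [eigenDiagonal, trace_mul_cycle]

theorem inv_eigenDiagonal {f : n → 𝕜} (hf : ∀ i, f i ≠ 0) :
    (hA.eigenDiagonal f)⁻¹ = hA.eigenDiagonal f⁻¹ := by
  refine inv_eq_right_inv ?_
  rw [← map_mul, ← map_one hA.eigenDiagonal]
  congr 1
  funext i
  exact mul_inv_cancel₀ (hf i)

theorem smul_add_one_eq_eigenDiagonal (p : ℝ) :
    p • A + 1 = hA.eigenDiagonal (fun i ↦ ((p * hA.eigenvalues i + 1 : ℝ) : 𝕜)) := by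
  conv_lhs => rw [← hA.eigenDiagonal_eigenvalues]
  rw [RCLike.real_smul_eq_coe_smul (K := 𝕜), ← map_one hA.eigenDiagonal, ← map_smul, ← map_add]
  congr 1
  funext i
  simp

theorem trace_mul_self : (A * A).trace = ((∑ i, hA.eigenvalues i ^ 2 : ℝ) : 𝕜) := by
  conv_lhs => rw [← hA.eigenDiagonal_eigenvalues]
  rw [← map_mul, trace_eigenDiagonal]
  simp [sq]

theorem trace_mul_smul_add_one_inv_mul_mul_smul_add_one_inv {p q : ℝ}
    (hp : ∀ i, p * hA.eigenvalues i + 1 ≠ 0) (hq : ∀ i, q * hA.eigenvalues i + 1 ≠ 0) :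
    (A * (q • A + 1)⁻¹ * A * (p • A + 1)⁻¹).trace =
      ((∑ i, hA.eigenvalues i ^ 2 /
        ((p * hA.eigenvalues i + 1) * (q * hA.eigenvalues i + 1)) : ℝ) : 𝕜) := by
  rw [hA.smul_add_one_eq_eigenDiagonal, hA.smul_add_one_eq_eigenDiagonal,
    hA.inv_eigenDiagonal (by exact_mod_cast hq), hA.inv_eigenDiagonal (by exact_mod_cast hp)]
  have hφA := hA.eigenDiagonal_eigenvalues
  -- abstracting `φ` and `d` removes the hidden occurrences of `A`, so that `A` can be rewritten
  set φ := hA.eigenDiagonal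
  set d := hA.eigenvalues
  rw [← hφA, ← map_mul, ← map_mul, ← map_mul, hA.trace_eigenDiagonal]
  push_cast
  refine Finset.sum_congr rfl fun i _ ↦ ?_
  simp only [Pi.mul_apply, Pi.inv_apply, Function.comp_apply]
  field_simp

end IsHermitian

end Matrix

/-- Lower bound in the paper's inequality (16): with `Ca := p_a·C_h + C_z`,
`Cb := p_b·C_h + C_z`, `Γ := C_z^{−1/2} C_h C_z^{−1/2}` (a Hermitian matrix) and
`C := σ_max(Γ)` its largest eigenvalue,
`tr{Γ²} / ((p_a·C + 1)(p_b·C + 1)) ≤ tr{C_h Cb⁻¹ C_h Ca⁻¹}`. -/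
theorem jeffreys_trace_lower_bound {n : ℕ} (Ch Cz : Matrix (Fin n) (Fin n) ℂ)
    (hh : Ch.PosDef) (hz : Cz.PosDef)
    (pa pb : ℝ) (hpa : 0 ≤ pa) (hpb : 0 ≤ pb)
    (Ca Cb Γ : Matrix (Fin n) (Fin n) ℂ)
    (hCa : Ca = (pa : ℂ) • Ch + Cz) (hCb : Cb = (pb : ℂ) • Ch + Cz)
    (hΓ : Γ = (Matrix.PosSemidef.oldSqrt hz.posSemidef)⁻¹ * Ch * (Matrix.PosSemidef.oldSqrt hz.posSemidef)⁻¹)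
    (hΓherm : Γ.IsHermitian)
    (C : ℝ) (hC : C = ⨆ i, hΓherm.eigenvalues i) :
    (Matrix.trace (Γ * Γ)).re / ((pa * C + 1) * (pb * C + 1)) ≤
      (Matrix.trace (Ch * Cb⁻¹ * Ch * Ca⁻¹)).re := by
  rw [hz.posSemidef.oldSqrt_eq_sqrt] at hΓ
  set S := CFC.sqrt Cz
  have hSS : S * S = Cz := CFC.sqrt_mul_sqrt_self Cz hz.posSemidef.nonneg
  have hS : IsUnit S.det :=
    isUnit_mul_self_iff.mp (by rw [← det_mul, hSS]; exact hz.det_pos.ne'.isUnit)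
  have hChS : Ch = S * Γ * S := by
    simp only [hΓ, mul_assoc, mul_nonsing_inv_cancel_left _ _ hS, nonsing_inv_mul S hS, mul_one]
  have hCS (p : ℝ) : (p : ℂ) • Ch + Cz = S * (p • Γ + 1) * S := by
    simp only [hChS, ← hSS, mul_add, add_mul, mul_one, Matrix.mul_smul, Matrix.smul_mul,
      Complex.coe_smul]
  have hΓpsd : Γ.PosSemidef := by
    have hS_herm : S⁻¹.IsHermitian := (CFC.sqrt_nonneg Cz).posSemidef.1.inv
    have := hh.posSemidef.mul_mul_conjTranspose_same S⁻¹
    rwa [hS_herm.eq, ← hΓ] at this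
  have hd_nonneg (i : Fin n) : 0 ≤ hΓherm.eigenvalues i := hΓpsd.eigenvalues_nonneg i
  have hd_le (i : Fin n) : hΓherm.eigenvalues i ≤ C := hC ▸ le_ciSup (Finite.bddAbove_range _) i
  have hpos {p : ℝ} (hp : 0 ≤ p) (i : Fin n) : p * hΓherm.eigenvalues i + 1 ≠ 0 := by
    have := hd_nonneg i
    positivity
  rw [hCa, hCb, hCS, hCS, hChS, trace_sandwich_mul_inv_mul_sandwich_mul_inv hS,
    hΓherm.trace_mul_smul_add_one_inv_mul_mul_smul_add_one_inv (hpos hpa) (hpos hpb),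
    hΓherm.trace_mul_self]
  simp only [← RCLike.re_to_complex, RCLike.ofReal_re, Finset.sum_div]
  exact Finset.sum_le_sum fun i _ ↦ sq_div_mul_add_one_le_of_le hpa hpb (hd_nonneg i) (hd_le i)
end

section
/- Let M be an n×n Hermitian positive definite complex matrix and set J := tr{(M − I) M⁻¹ (M − I)}. Then ‖M − I‖_F² ≤ J·(J + 2). (Key step in proving that divergence of the Jeffreys divergence forces divergence of ‖C̊ − I‖_F², paper's condition (21).) -/
open Matrix
open scoped ComplexOrder

/-- Squared Frobenius norm of a complex matrix: `‖X‖_F² = tr{Xᴴ X}` (a real number). -/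
noncomputable def frobSq {m n : ℕ} (X : Matrix (Fin m) (Fin n) ℂ) : ℝ :=
  (Matrix.trace (Xᴴ * X)).re

/-- Key step towards the paper's condition (21): for a Hermitian positive definite `M`,
setting `J := tr{(M − I) M⁻¹ (M − I)}`, one has `‖M − I‖_F² ≤ J·(J + 2)`. -/
theorem frobSq_le_J_mul_J_add_two {n : ℕ} (M : Matrix (Fin n) (Fin n) ℂ)
    (hM : M.PosDef) (J : ℝ)
    (hJ : J = (Matrix.trace ((M - 1) * M⁻¹ * (M - 1))).re) :
    frobSq (M - 1) ≤ J * (J + 2) := by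
  classical
  have hH := hM.1
  set lam : Fin n → ℝ := hH.eigenvalues with hlam
  have hpos : ∀ i, 0 < lam i := hM.eigenvalues_pos
  set U : Matrix (Fin n) (Fin n) ℂ := (hH.eigenvectorUnitary : Matrix (Fin n) (Fin n) ℂ) with hU
  have h1 : U * star U = 1 := (Matrix.mem_unitaryGroup_iff).mp hH.eigenvectorUnitary.2
  have h2 : star U * U = 1 := (Matrix.mem_unitaryGroup_iff').mp hH.eigenvectorUnitary.2
  set D : Matrix (Fin n) (Fin n) ℂ := diagonal (fun i => (lam i : ℂ)) with hD
  have hspec : M = U * D * star U := hH.spectral_theorem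
  have hne : ∀ i, (lam i : ℂ) ≠ 0 := fun i =>
    Complex.ofReal_ne_zero.mpr (ne_of_gt (hpos i))
  -- conjugation is multiplicative
  have hmul : ∀ X Y : Matrix (Fin n) (Fin n) ℂ,
      (U * X * star U) * (U * Y * star U) = U * (X * Y) * star U := by
    intro X Y
    simp only [Matrix.mul_assoc]
    rw [← Matrix.mul_assoc (star U) U (Y * star U), h2, Matrix.one_mul]
  -- inverse
  set Dinv : Matrix (Fin n) (Fin n) ℂ := diagonal (fun i => (lam i : ℂ)⁻¹) with hDinv
  have hDD : D * Dinv = 1 := by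
    rw [hD, hDinv, diagonal_mul_diagonal]
    simp only [mul_inv_cancel₀ (hne _)]
    exact diagonal_one
  have hMinv : M⁻¹ = U * Dinv * star U := by
    apply Matrix.inv_eq_right_inv
    rw [hspec, hmul, hDD, Matrix.mul_one, h1]
  -- M - 1
  set E : Matrix (Fin n) (Fin n) ℂ := diagonal (fun i => (lam i : ℂ) - 1) with hE
  have hM1 : M - 1 = U * E * star U := by
    rw [hE]
    have : diagonal (fun i => (lam i : ℂ) - 1) = D - 1 := by
      rw [hD, ← diagonal_one, diagonal_sub]
    rw [this, Matrix.mul_sub, Matrix.mul_one, Matrix.sub_mul, h1, hspec]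
  -- trace of conjugation
  have hconj : ∀ X : Matrix (Fin n) (Fin n) ℂ, trace (U * X * star U) = trace X := by
    intro X
    rw [trace_mul_cycle, h2, Matrix.one_mul]
  -- compute J
  have hJ' : J = ∑ i, ((lam i - 1)^2 / lam i) := by
    rw [hJ, hM1, hMinv, hmul, hmul]
    rw [hconj, hE, hDinv, diagonal_mul_diagonal, diagonal_mul_diagonal, trace_diagonal]
    rw [Complex.re_sum]
    congr 1; funext i
    rw [← Complex.ofReal_one, ← Complex.ofReal_sub, ← Complex.ofReal_inv,
      ← Complex.ofReal_mul, ← Complex.ofReal_mul, Complex.ofReal_re]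
    field_simp
  -- compute frobSq
  have hherm : (M - 1)ᴴ = M - 1 :=
    hH.sub (Matrix.isHermitian_one (n := Fin n) (α := ℂ))
  have hF : frobSq (M - 1) = ∑ i, (lam i - 1)^2 := by
    rw [frobSq, hherm, hM1, hmul]
    rw [hconj, hE, diagonal_mul_diagonal, trace_diagonal, Complex.re_sum]
    congr 1; funext i
    rw [← Complex.ofReal_one, ← Complex.ofReal_sub, ← Complex.ofReal_mul, Complex.ofReal_re]
    ring
  -- scalar inequality
  set g : Fin n → ℝ := fun i => (lam i - 1)^2 / lam i with hg
  have hgnn : ∀ i, 0 ≤ g i := fun i => div_nonneg (sq_nonneg _) (hpos i).le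
  have key : ∀ i, (lam i - 1)^2 ≤ g i ^ 2 + 2 * g i := by
    intro i
    have h := hpos i
    have e1 : g i * lam i = (lam i - 1)^2 := div_mul_cancel₀ _ (ne_of_gt h)
    have e2 : g i + 2 - lam i = 1 / lam i := by
      rw [hg]; field_simp; ring
    nlinarith [mul_nonneg (hgnn i) (le_of_lt (one_div_pos.mpr h)), e1, e2, hgnn i]
  have hsum : ∑ i, (lam i - 1)^2 ≤ (∑ i, g i)^2 + 2 * ∑ i, g i := by
    calc ∑ i, (lam i - 1)^2 ≤ ∑ i, (g i ^2 + 2 * g i) :=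
          Finset.sum_le_sum (fun i _ => key i)
      _ = ∑ i, g i ^ 2 + 2 * ∑ i, g i := by rw [Finset.sum_add_distrib, Finset.mul_sum]
      _ ≤ (∑ i, g i)^2 + 2 * ∑ i, g i := by
          gcongr ?_ + _
          exact Finset.sum_sq_le_sq_sum_of_nonneg (fun i _ => hgnn i)
  rw [hF, hJ']
  calc ∑ i, (lam i - 1)^2 ≤ (∑ i, g i)^2 + 2 * ∑ i, g i := hsum
    _ = (∑ i, g i) * (∑ i, g i + 2) := by ring
end

section
/- Let c > 0 and let (M_k) be a sequence of Hermitian positive definite complex matrices (of sizes n_k × n_k) with σ_min(M_k) ≥ c for all k. Then tr{(M_k − I) M_k⁻¹ (M_k − I)} → ∞ as k → ∞ if and only if ‖M_k − I‖_F² → ∞ as k → ∞. (Paper's equivalence (21), after Kailath–Weinert, characterizing asymptotically singular detection in the large array regime in terms of the normalized covariance matrix.) -/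
/-! Both sides are spectral: if `λᵢ ≥ c` are the eigenvalues of `M`, then
`tr{(M - I) M⁻¹ (M - I)} = W := ∑ (λᵢ - 1)² / λᵢ` and `‖M - I‖_F² = F := ∑ (λᵢ - 1)²`.
Termwise `c W ≤ F`. Conversely each `|λᵢ - 1| ≤ √F`, so `λᵢ ≤ 1 + √F`, giving
`F ≤ (1 + √F) W` and hence `W ≥ √F - 1`. -/

open Matrix Filter
open scoped ComplexOrder

namespace Matrix.IsHermitian

variable {n 𝕜 : Type*} [Fintype n] [DecidableEq n] [RCLike 𝕜] {A : Matrix n n 𝕜}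

theorem trace_cfc (hA : A.IsHermitian) (f : ℝ → ℝ) :
    (cfc f A).trace = ∑ i, (f (hA.eigenvalues i) : 𝕜) := by
  rw [hA.cfc_eq, IsHermitian.cfc, Unitary.conjStarAlgAut_apply, trace_mul_cycle,
    Unitary.coe_star_mul_self, one_mul, trace_diagonal]
  rfl

theorem sub_one_mul_inv_mul_sub_one_eq_cfc (hA : A.IsHermitian) (hu : IsUnit A) :
    (A - 1) * A⁻¹ * (A - 1) = cfc (fun x : ℝ => (x - 1) ^ 2 / x) A := by
  have hsub : A - 1 = cfc (fun x : ℝ => x - 1) A := by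
    rw [cfc_sub .., cfc_id' .., cfc_const_one ..]
  have hinv : A⁻¹ = cfc (fun x : ℝ => x⁻¹) A := by
    rw [nonsing_inv_eq_ringInverse, cfc_ringInverse_id _ hu]
  have hcont (f : ℝ → ℝ) : ContinuousOn f (spectrum ℝ A) := finite_real_spectrum.continuousOn f
  rw [hsub, hinv, ← cfc_mul (hf := hcont _) (hg := hcont _),
    ← cfc_mul (hf := hcont _) (hg := hcont _)]
  congr 1 with x
  ring

theorem conjTranspose_sub_one_mul_sub_one_eq_cfc (hA : A.IsHermitian) :
    (A - 1)ᴴ * (A - 1) = cfc (fun x : ℝ => (x - 1) ^ 2) A := by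
  rw [cfc_pow .., cfc_sub .., cfc_id' .., cfc_const_one .., pow_two, conjTranspose_sub, hA.eq,
    conjTranspose_one]

end Matrix.IsHermitian

theorem re_trace_sub_one_mul_inv_mul_sub_one {n : Type*} [Fintype n] [DecidableEq n]
    {A : Matrix n n ℂ} (hA : A.IsHermitian) (hu : IsUnit A) :
    ((A - 1) * A⁻¹ * (A - 1)).trace.re = ∑ i, (hA.eigenvalues i - 1) ^ 2 / hA.eigenvalues i := by
  rw [hA.sub_one_mul_inv_mul_sub_one_eq_cfc hu, hA.trace_cfc, Complex.re_sum]
  rfl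

theorem frobSq_sub_one {m : ℕ} {A : Matrix (Fin m) (Fin m) ℂ} (hA : A.IsHermitian) :
    frobSq (A - 1) = ∑ i, (hA.eigenvalues i - 1) ^ 2 := by
  rw [frobSq, hA.conjTranspose_sub_one_mul_sub_one_eq_cfc, hA.trace_cfc, Complex.re_sum]
  rfl

section EigenvalueSums

variable {ι : Type*} [Fintype ι] (l : ι → ℝ)

theorem mul_sum_sq_sub_one_div_le {c : ℝ} (hc : 0 < c) (hl : ∀ i, c ≤ l i) :
    c * ∑ i, (l i - 1) ^ 2 / l i ≤ ∑ i, (l i - 1) ^ 2 := by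
  rw [Finset.mul_sum]
  refine Finset.sum_le_sum fun i _ => ?_
  have hli : 0 < l i := hc.trans_le (hl i)
  calc c * ((l i - 1) ^ 2 / l i) ≤ l i * ((l i - 1) ^ 2 / l i) := by gcongr; exact hl i
    _ = (l i - 1) ^ 2 := mul_div_cancel₀ _ hli.ne'

theorem sum_sq_sub_one_le_mul_sum_div (hl : ∀ i, 0 < l i) :
    ∑ i, (l i - 1) ^ 2 ≤ (1 + √(∑ i, (l i - 1) ^ 2)) * ∑ i, (l i - 1) ^ 2 / l i := by
  set s := √(∑ i, (l i - 1) ^ 2)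
  have hle (i : ι) : l i ≤ 1 + s := by
    have hsq : (l i - 1) ^ 2 ≤ ∑ j, (l j - 1) ^ 2 :=
      Finset.single_le_sum (fun j _ => sq_nonneg (l j - 1)) (Finset.mem_univ i)
    have := Real.abs_le_sqrt hsq
    linarith [le_abs_self (l i - 1)]
  rw [Finset.mul_sum]
  refine Finset.sum_le_sum fun i _ => ?_
  calc (l i - 1) ^ 2 = l i * ((l i - 1) ^ 2 / l i) := (mul_div_cancel₀ _ (hl i).ne').symm
    _ ≤ (1 + s) * ((l i - 1) ^ 2 / l i) := by
        gcongr
        · exact div_nonneg (sq_nonneg _) (hl i).le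
        · exact hle i

end EigenvalueSums

theorem tendsto_atTop_of_le_one_add_sqrt_mul {α : Type*} {L : Filter α} {f g : α → ℝ}
    (hg : ∀ a, 0 ≤ g a) (hfg : ∀ a, f a ≤ (1 + √(f a)) * g a) (hf : Tendsto f L atTop) :
    Tendsto g L atTop := by
  have hbound (a : α) : √(f a) - 1 ≤ g a := by
    have hsq : √(f a) ^ 2 ≤ (1 + √(f a)) * g a := by
      rcases le_total 0 (f a) with h | h
      · rw [Real.sq_sqrt h]
        exact hfg a
      · rw [Real.sqrt_eq_zero'.2 h]
        simpa using hg a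
    nlinarith [Real.sqrt_nonneg (f a)]
  exact tendsto_atTop_mono hbound
    (tendsto_atTop_add_const_right _ (-1) (Real.tendsto_sqrt_atTop.comp hf))

/-- Paper's equivalence (21), after Kailath–Weinert: for a sequence `M_k` of Hermitian
positive definite matrices whose eigenvalues are uniformly bounded below by `c > 0`
(i.e. `σ_min(M_k) ≥ c`), the weighted norms `tr{(M_k − I) M_k⁻¹ (M_k − I)}` diverge
if and only if the Frobenius distances `‖M_k − I‖_F²` diverge. -/
theorem weighted_norm_tendsto_atTop_iff_frobSq {c : ℝ} (hc : 0 < c)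
    (n : ℕ → ℕ) (M : ∀ k, Matrix (Fin (n k)) (Fin (n k)) ℂ)
    (hM : ∀ k, (M k).PosDef)
    (hmin : ∀ k i, c ≤ (hM k).1.eigenvalues i) :
    Tendsto (fun k => (Matrix.trace ((M k - 1) * (M k)⁻¹ * (M k - 1))).re) atTop atTop ↔
      Tendsto (fun k => frobSq (M k - 1)) atTop atTop := by
  have hpos (k : ℕ) (i : Fin (n k)) : 0 < (hM k).1.eigenvalues i := hc.trans_le (hmin k i)
  simp only [fun k => re_trace_sub_one_mul_inv_mul_sub_one (hM k).1 (hM k).isUnit,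
    fun k => frobSq_sub_one (hM k).1]
  constructor
  · intro h
    exact tendsto_atTop_mono (fun k => mul_sum_sq_sub_one_div_le _ hc (hmin k))
      (h.const_mul_atTop hc)
  · exact tendsto_atTop_of_le_one_add_sqrt_mul
      (fun k => Finset.sum_nonneg fun i _ => div_nonneg (sq_nonneg _) (hpos k i).le)
      (fun k => sum_sq_sub_one_le_mul_sum_div _ (hpos k))
end

section
/- Let K, N_t, N_r ≥ 1, let S_a and S_b be K×N_t complex matrices, let W be an invertible (K·N_r)×(K·N_r) complex matrix, and let C_h be an (N_t·N_r)×(N_t·N_r) Hermitian positive definite complex matrix. Define Ξ_a := W (I_{N_r} ⊗ S_a) C_h (I_{N_r} ⊗ S_a)^H W^H and Ξ_b := W (I_{N_r} ⊗ S_b) C_h (I_{N_r} ⊗ S_b)^H W^H. Then colsp(Ξ_a) = colsp(Ξ_b) if and only if colsp(S_a) = colsp(S_b). (Algebraic core (26)–(30) of the proof of the paper's Proposition 2: the signal subspaces at the receiver coincide exactly when the codewords span the same column space.) -/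
open Matrix
open scoped Kronecker ComplexOrder

/-!
Positive definiteness of `C` gives `ker (Aᴴ C A) = ker A`, so `A C Aᴴ` has the rank of `A`; as its
column space lies in that of `A`, the two coincide. Hence the column space of `Ξ` is the image
under the invertible `W` of the column space of `I ⊗ S`, which is the product of `N_r` copies of
the column space of `S`.
-/

namespace Matrix

variable {ι m n R : Type*} [Fintype n]

section PosDef

variable [Fintype m] [PartialOrder R]

theorem ker_mulVecLin_conjTranspose_mul_mul_of_posDef [CommRing R] [StarRing R]
    (A : Matrix m n R) {C : Matrix m m R} (hC : C.PosDef) :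
    LinearMap.ker (Aᴴ * C * A).mulVecLin = LinearMap.ker A.mulVecLin := by
  ext x
  simp only [LinearMap.mem_ker, mulVecLin_apply]
  constructor
  · intro h
    by_contra hx
    have hpos := hC.dotProduct_mulVec_pos hx
    rw [star_mulVec, ← dotProduct_mulVec, mulVec_mulVec, mulVec_mulVec, h, dotProduct_zero] at hpos
    exact hpos.false
  · intro h
    rw [← mulVec_mulVec, h, mulVec_zero]

variable [Field R] [StarRing R]

theorem rank_conjTranspose_mul_mul_of_posDef (A : Matrix m n R) {C : Matrix m m R}
    (hC : C.PosDef) : (Aᴴ * C * A).rank = A.rank := by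
  refine add_right_cancel (b := Module.finrank R (LinearMap.ker A.mulVecLin)) ?_
  rw [rank, rank, ← ker_mulVecLin_conjTranspose_mul_mul_of_posDef A hC,
    LinearMap.finrank_range_add_finrank_ker, ker_mulVecLin_conjTranspose_mul_mul_of_posDef A hC,
    LinearMap.finrank_range_add_finrank_ker]

theorem range_mulVecLin_mul_mul_conjTranspose_of_posDef [StarOrderedRing R] (A : Matrix m n R)
    {C : Matrix n n R} (hC : C.PosDef) :
    LinearMap.range (A * C * Aᴴ).mulVecLin = LinearMap.range A.mulVecLin := by
  refine Submodule.eq_of_le_of_finrank_le ?_ ?_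
  · rw [Matrix.mul_assoc, mulVecLin_mul]
    exact LinearMap.range_comp_le_range _ _
  · have hrank := rank_conjTranspose_mul_mul_of_posDef Aᴴ hC
    rw [conjTranspose_conjTranspose, rank_conjTranspose] at hrank
    exact hrank.ge

end PosDef

section Units

variable [CommRing R] [DecidableEq n]

theorem range_mulVecLin_mul_of_isUnit (A : Matrix m n R) {U : Matrix n n R} (hU : IsUnit U) :
    LinearMap.range (A * U).mulVecLin = LinearMap.range A.mulVecLin := by
  rw [mulVecLin_mul]
  exact LinearMap.range_comp_of_range_eq_top _
    (LinearMap.range_eq_top.mpr (mulVec_surjective_iff_isUnit.mpr hU))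

end Units

section Kronecker

variable [Fintype ι] [DecidableEq ι] [CommSemiring R]

theorem one_kronecker_mulVec_apply (S : Matrix m n R) (x : ι × n → R) (i : ι) (k : m) :
    (((1 : Matrix ι ι R) ⊗ₖ S) *ᵥ x) (i, k) = (S *ᵥ fun t => x (i, t)) k := by
  simp [mulVec, dotProduct, Fintype.sum_prod_type, one_apply, ite_mul, Finset.sum_ite_eq]

theorem mem_range_one_kronecker_mulVecLin_iff (S : Matrix m n R) (y : ι × m → R) :
    y ∈ LinearMap.range ((1 : Matrix ι ι R) ⊗ₖ S).mulVecLin ↔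
      ∀ i, (fun k => y (i, k)) ∈ LinearMap.range S.mulVecLin := by
  constructor
  · rintro ⟨x, rfl⟩ i
    exact ⟨fun t => x (i, t), funext fun k => (one_kronecker_mulVec_apply S x i k).symm⟩
  · intro h
    choose x hx using h
    refine ⟨fun p => x p.1 p.2, funext fun ⟨i, k⟩ => ?_⟩
    rw [mulVecLin_apply, one_kronecker_mulVec_apply]
    exact congrFun (hx i) k

theorem range_one_kronecker_mulVecLin_le_iff [Nonempty ι] (S S' : Matrix m n R) :
    LinearMap.range ((1 : Matrix ι ι R) ⊗ₖ S).mulVecLin ≤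
        LinearMap.range ((1 : Matrix ι ι R) ⊗ₖ S').mulVecLin ↔
      LinearMap.range S.mulVecLin ≤ LinearMap.range S'.mulVecLin := by
  constructor
  · intro h y hy
    obtain ⟨i₀⟩ := ‹Nonempty ι›
    set Y : ι × m → R := fun p => if p.1 = i₀ then y p.2 else 0
    have hY : Y ∈ LinearMap.range ((1 : Matrix ι ι R) ⊗ₖ S).mulVecLin := by
      rw [mem_range_one_kronecker_mulVecLin_iff]
      intro i
      by_cases hi : i = i₀
      · simpa [Y, hi] using hy
      · exact ⟨0, by ext; simp [Y, hi]⟩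
    simpa [Y] using (mem_range_one_kronecker_mulVecLin_iff S' Y).mp (h hY) i₀
  · intro h y hy
    rw [mem_range_one_kronecker_mulVecLin_iff] at hy ⊢
    exact fun i => h (hy i)

theorem range_one_kronecker_mulVecLin_eq_iff [Nonempty ι] (S S' : Matrix m n R) :
    LinearMap.range ((1 : Matrix ι ι R) ⊗ₖ S).mulVecLin =
        LinearMap.range ((1 : Matrix ι ι R) ⊗ₖ S').mulVecLin ↔
      LinearMap.range S.mulVecLin = LinearMap.range S'.mulVecLin := by
  simp only [le_antisymm_iff, range_one_kronecker_mulVecLin_le_iff]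

end Kronecker

end Matrix

theorem signal_subspace_eq_iff_colsp_eq_general {K Nt Nr : ℕ}
    (hNr : 1 ≤ Nr)
    (Sa Sb : Matrix (Fin K) (Fin Nt) ℂ)
    (W : Matrix (Fin Nr × Fin K) (Fin Nr × Fin K) ℂ) (hW : IsUnit W)
    (Ch : Matrix (Fin Nr × Fin Nt) (Fin Nr × Fin Nt) ℂ) (hCh : Ch.PosDef)
    (Ξa Ξb : Matrix (Fin Nr × Fin K) (Fin Nr × Fin K) ℂ)
    (hΞa : Ξa = W * ((1 : Matrix (Fin Nr) (Fin Nr) ℂ) ⊗ₖ Sa) * Ch *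
        ((1 : Matrix (Fin Nr) (Fin Nr) ℂ) ⊗ₖ Sa)ᴴ * Wᴴ)
    (hΞb : Ξb = W * ((1 : Matrix (Fin Nr) (Fin Nr) ℂ) ⊗ₖ Sb) * Ch *
        ((1 : Matrix (Fin Nr) (Fin Nr) ℂ) ⊗ₖ Sb)ᴴ * Wᴴ) :
    LinearMap.range Ξa.mulVecLin = LinearMap.range Ξb.mulVecLin ↔
      LinearMap.range Sa.mulVecLin = LinearMap.range Sb.mulVecLin := by
  have : Nonempty (Fin Nr) := Fin.pos_iff_nonempty.mp hNr
  have hWH : IsUnit Wᴴ := hW.star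
  have signal_subspace : ∀ S : Matrix (Fin K) (Fin Nt) ℂ,
      LinearMap.range (W * ((1 : Matrix (Fin Nr) (Fin Nr) ℂ) ⊗ₖ S) * Ch *
          ((1 : Matrix (Fin Nr) (Fin Nr) ℂ) ⊗ₖ S)ᴴ * Wᴴ).mulVecLin =
        (LinearMap.range ((1 : Matrix (Fin Nr) (Fin Nr) ℂ) ⊗ₖ S).mulVecLin).map W.mulVecLin := by
    intro S
    rw [range_mulVecLin_mul_of_isUnit _ hWH, Matrix.mul_assoc W, Matrix.mul_assoc W,
      mulVecLin_mul, LinearMap.range_comp,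
      range_mulVecLin_mul_mul_conjTranspose_of_posDef _ hCh]
  rw [hΞa, hΞb, signal_subspace, signal_subspace,
    (Submodule.map_injective_of_injective (mulVec_injective_of_isUnit hW)).eq_iff,
    range_one_kronecker_mulVecLin_eq_iff]

/-- Algebraic core (26)–(30) of the paper's Proposition 2. With codewords
`S_a, S_b : K×N_t`, an invertible `W` of size `(K·N_r)×(K·N_r)` (indexed by `Fin N_r × Fin K`)
and a Hermitian positive definite channel covariance `C_h` of size `(N_t·N_r)×(N_t·N_r)`
(indexed by `Fin N_r × Fin N_t`), the receiver signal subspaces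
`Ξ_⋄ := W (I_{N_r} ⊗ S_⋄) C_h (I_{N_r} ⊗ S_⋄)ᴴ Wᴴ` coincide exactly when the codewords span
the same column space. -/
theorem signal_subspace_eq_iff_colsp_eq {K Nt Nr : ℕ}
    (hK : 1 ≤ K) (hNt : 1 ≤ Nt) (hNr : 1 ≤ Nr)
    (Sa Sb : Matrix (Fin K) (Fin Nt) ℂ)
    (W : Matrix (Fin Nr × Fin K) (Fin Nr × Fin K) ℂ) (hW : IsUnit W)
    (Ch : Matrix (Fin Nr × Fin Nt) (Fin Nr × Fin Nt) ℂ) (hCh : Ch.PosDef)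
    (Ξa Ξb : Matrix (Fin Nr × Fin K) (Fin Nr × Fin K) ℂ)
    (hΞa : Ξa = W * ((1 : Matrix (Fin Nr) (Fin Nr) ℂ) ⊗ₖ Sa) * Ch *
        ((1 : Matrix (Fin Nr) (Fin Nr) ℂ) ⊗ₖ Sa)ᴴ * Wᴴ)
    (hΞb : Ξb = W * ((1 : Matrix (Fin Nr) (Fin Nr) ℂ) ⊗ₖ Sb) * Ch *
        ((1 : Matrix (Fin Nr) (Fin Nr) ℂ) ⊗ₖ Sb)ᴴ * Wᴴ) :
    LinearMap.range Ξa.mulVecLin = LinearMap.range Ξb.mulVecLin ↔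
      LinearMap.range Sa.mulVecLin = LinearMap.range Sb.mulVecLin :=
  signal_subspace_eq_iff_colsp_eq_general hNr Sa Sb W hW Ch hCh Ξa Ξb hΞa hΞb
end
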